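/- Equip H := H_a ∪ H_b ∪ H_c ⊂ M(A) with any total order ≤ such that: within H_b and within H_c the order is the one defined in the construction; within each H_a^n an arbitrary total order is chosen; for each type d ∈ {a,b,c}, elements of H_d^p precede elements of H_d^q whenever p > q; and every element of H_a precedes every element of H_b, which precedes every element of H_c. Then the Hall-set conditions hold for all composite elements of H: for every h = (h′,h″) ∈ H with h not a letter, one has h″ ∈ H and h < h″; h′ ∈ H and h′ < h″; and either h′ is a letter (h′ ∈ {a,b}) or h′ = (x,y) with y ∈ H and y ≥ h″. -/

import Mathlib

/-! STATEMENT 13: any total order on `H = H_a ∪ H_b ∪ H_c` compatible with the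
construction satisfies the Hall-set conditions on composite elements. -/

/-- The three-letter alphabet `A = {a, b, c}`. -/
inductive Letter : Type
  | a | b | c
deriving DecidableEq

/-- Words on the alphabet. -/
abbrev Word := List Letter

/-- The free magma `M(A)` on the alphabet: binary complete planar rooted trees
with leaves labelled by letters (fully parenthesized expressions). -/
inductive FM : Type
  | leaf : Letter → FM
  | node : FM → FM → FM
deriving DecidableEq

/-- The foliage map `f : M(A) → A*` (drop all brackets). -/
def fol : FM → Word
  | FM.leaf d => [d]
  | FM.node t t' => fol t ++ fol t'

/-! ### The ordered families of trees `H_b^n`, `H_c^n`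

Each level is built as a *sorted list* (increasing with respect to the total
order of the construction); across levels, trees of higher level (with more
leaves) are *smaller*.  The `H_c`-levels are produced by a single
table-building recursion. -/

/-- Table of the levels `H_c^1, …, H_c^n` (entry `i` is the sorted list of the
trees of `H_c^i`; entry `0` is empty).

* `H_c^1 = {c}`.
* For `m = 2k` even, `H_c^m = ⋃_{i=1}^{k} {(v,w) : v ∈ H_b^i, w ∈ H_c^{m−i}}`,
  ordered lexicographically (`(v,w) < (v′,w′)` iff `v < v′`, or `v = v′` and
  `w < w′`; `v`'s with more leaves are smaller, so the blocks appear for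
  `i = k, k−1, …, 1`), where `H_b^1 = {b}` and `H_b^i = {(a,v′) : v′ ∈ H_c^{i−1}}`.
* For `m = 2k+1` odd, additionally the block
  `E_k = {((a,v),w) : v, w ∈ H_c^k, v ≥ w}` is prepended (its elements are
  smaller than all other elements of `H_c^m`), ordered lexicographically in
  `(v,w)`. -/
def HClevels : ℕ → List (List FM)
  | 0 => [[]]
  | n + 1 =>
    let t := HClevels n
    let C : ℕ → List FM := fun i => t.getD i []
    let m := n + 1
    let k := m / 2
    let prods : List FM :=
      (List.range k).flatMap (fun j =>
        let i := k - j
        if i = 1 then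
          (C (m - 1)).map (fun w => FM.node (FM.leaf Letter.b) w)
        else
          (C (i - 1)).flatMap (fun v =>
            (C (m - i)).map (fun w =>
              FM.node (FM.node (FM.leaf Letter.a) v) w)))
    let Ck := C k
    let Ek : List FM :=
      (List.range Ck.length).flatMap (fun r =>
        (List.range (r + 1)).map (fun s =>
          FM.node (FM.node (FM.leaf Letter.a) (Ck.getD r (FM.leaf Letter.a)))
            (Ck.getD s (FM.leaf Letter.a))))
    let Cm : List FM :=
      if m = 1 then [FM.leaf Letter.c]
      else if m % 2 = 0 then prods
      else Ek ++ prods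
    t ++ [Cm]

/-- The level `H_c^n`, as a sorted (increasing) list of trees. -/
def HCn (n : ℕ) : List FM := (HClevels n).getD n []

/-- The level `H_b^n`, as a sorted (increasing) list of trees:
`H_b^1 = {b}` and `H_b^n = {(a,v) : v ∈ H_c^{n−1}}` with the inherited order. -/
def HBn : ℕ → List FM
  | 0 => []
  | 1 => [FM.leaf Letter.b]
  | n + 2 => (HCn (n + 1)).map (fun v => FM.node (FM.leaf Letter.a) v)

/-- The level (number of leaves) of a tree. -/
def lev (h : FM) : ℕ := (fol h).length

/-- Position of a tree inside its level `H_c^{lev h}`. -/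
def cIdx (h : FM) : ℕ := (HCn (lev h)).findIdx (fun x => decide (x = h))

/-- Position of a tree inside its level `H_b^{lev h}`. -/
def bIdx (h : FM) : ℕ := (HBn (lev h)).findIdx (fun x => decide (x = h))

/-- The strict total order on `H_c = ⋃_n H_c^n`: trees of higher level are
smaller, trees of the same level are compared by position in the sorted level. -/
def cLt (v w : FM) : Prop := lev w < lev v ∨ (lev v = lev w ∧ cIdx v < cIdx w)

/-- `v ≤ w` in `H_c`. -/
def cLe (v w : FM) : Prop := cLt v w ∨ v = w

/-- The strict total order on `H_b = ⋃_n H_b^n`: trees of higher level are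
smaller, trees of the same level are compared by position in the sorted level. -/
def bLt (v w : FM) : Prop := lev w < lev v ∨ (lev v = lev w ∧ bIdx v < bIdx w)

/-- `v ≤ w` in `H_b`. -/
def bLe (v w : FM) : Prop := bLt v w ∨ v = w

/-- Membership in `H_b = ⋃_n H_b^n`. -/
def memHB (h : FM) : Prop := ∃ n : ℕ, h ∈ HBn n

/-- Membership in `H_c = ⋃_n H_c^n`. -/
def memHC (h : FM) : Prop := ∃ n : ℕ, h ∈ HCn n

/-- Membership in `H_a = ⋃_n H_a^n`: the trees `(⋯((a,v₁),v₂)⋯,v_i)` with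
`i ≥ 0`, all `v_j ∈ H_b` and `v₁ ≥ ⋯ ≥ v_i` (encoded as a left fold of `node`
over the nonincreasing list `[v₁, …, v_i]`). -/
def memHA (h : FM) : Prop :=
  ∃ l : List FM, (∀ v ∈ l, memHB v) ∧ List.Chain' (fun v w => bLe w v) l ∧
    h = l.foldl FM.node (FM.leaf Letter.a)

/-- Membership in `H = H_a ∪ H_b ∪ H_c`. -/
def memH (h : FM) : Prop := memHA h ∨ memHB h ∨ memHC h

/-! In a composite element `(h', h'')` of `H`, the right factor `h''` always lies in a later
family or a shorter level than the whole tree: in `H_a` it is the last, hence smallest, factor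
from `H_b`; in `H_b` the tree is `(a, v)` with `v ∈ H_c`; in `H_c^m` one has `h' ∈ H_b` and
`h'' ∈ H_c` with fewer leaves. So `h < h''` and `h' < h''` follow from `H_a < H_b < H_c` and from
larger levels coming first. For the last condition in `H_c^m`, `h'` is `b` or `(a, v)` with
`v ≥ h''`: in the product blocks `v` has fewer leaves than `h''`, and in `E_k` this is the
defining inequality, which transfers to the order because `H_c^k` is a list without
duplicates, so the position of a tree in it is its index. -/

open FM Letter List

@[simp] lemma lev_leaf (d : Letter) : lev (leaf d) = 1 := rfl

@[simp] lemma lev_node (s t : FM) : lev (node s t) = lev s + lev t := by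
  simp [lev, fol]

section NextLevel

variable (C : ℕ → List FM)

/-- `{(v, w) : v ∈ H_b^i, w ∈ H_c^(m-i)}`, with `H_b^i` unfolded. -/
def prodBlock (m i : ℕ) : List FM :=
  if i = 1 then (C (m - 1)).map (node (leaf b))
  else (C (i - 1)).flatMap fun v => (C (m - i)).map (node (node (leaf a) v))

def prodBlocks (m : ℕ) : List FM :=
  (range (m / 2)).flatMap fun j => prodBlock C m (m / 2 - j)

/-- `E_k`, from the increasing list `Ck` of `H_c^k`. -/
def eBlock (Ck : List FM) : List FM :=
  (range Ck.length).flatMap fun r =>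
    (range (r + 1)).map fun s =>
      node (node (leaf a) (Ck.getD r (leaf a))) (Ck.getD s (leaf a))

/-- The step of `HClevels`: `H_c^m` built from the lower levels `C i`, `i < m`. -/
def nextLevel (m : ℕ) : List FM :=
  if m = 1 then [leaf c]
  else if m % 2 = 0 then prodBlocks C m
  else eBlock (C (m / 2)) ++ prodBlocks C m

variable {C} {m : ℕ}

lemma nextLevel_congr {C' : ℕ → List FM} (h : ∀ i < m, C i = C' i) :
    nextLevel C m = nextLevel C' m := by
  rcases Nat.lt_or_ge m 2 with hm | hm
  · interval_cases m <;> rfl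
  have hblocks : prodBlocks C m = prodBlocks C' m := by
    refine flatMap_congr fun j hj => ?_
    rw [mem_range] at hj
    unfold prodBlock
    rw [h (m - 1) (by omega), h (m / 2 - j - 1) (by omega), h (m - (m / 2 - j)) (by omega)]
  unfold nextLevel
  rw [hblocks, h (m / 2) (by omega)]

lemma mem_prodBlock {i : ℕ} {h : FM} (hh : h ∈ prodBlock C m i) :
    (i = 1 ∧ ∃ w ∈ C (m - 1), h = node (leaf b) w) ∨
      (i ≠ 1 ∧ ∃ v ∈ C (i - 1), ∃ w ∈ C (m - i), h = node (node (leaf a) v) w) := by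
  unfold prodBlock at hh
  split_ifs at hh with hi
  · obtain ⟨w, hw, rfl⟩ := mem_map.1 hh
    exact Or.inl ⟨hi, w, hw, rfl⟩
  · obtain ⟨v, hv, hh⟩ := mem_flatMap.1 hh
    obtain ⟨w, hw, rfl⟩ := mem_map.1 hh
    exact Or.inr ⟨hi, v, hv, w, hw, rfl⟩

lemma mem_prodBlocks {h : FM} (hh : h ∈ prodBlocks C m) :
    (2 ≤ m ∧ ∃ w ∈ C (m - 1), h = node (leaf b) w) ∨
      (∃ i, 2 ≤ i ∧ 2 * i ≤ m ∧ ∃ v ∈ C (i - 1), ∃ w ∈ C (m - i),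
        h = node (node (leaf a) v) w) := by
  obtain ⟨j, hj, hh⟩ := mem_flatMap.1 hh
  rw [mem_range] at hj
  rcases mem_prodBlock hh with ⟨-, hw⟩ | ⟨hi, v, hv, w, hw, rfl⟩
  · exact Or.inl ⟨by omega, hw⟩
  · exact Or.inr ⟨m / 2 - j, by omega, by omega, v, hv, w, hw, rfl⟩

lemma mem_eBlock {Ck : List FM} {h : FM} (hh : h ∈ eBlock Ck) :
    ∃ r s, ∃ (hr : r < Ck.length) (hs : s ≤ r),
      h = node (node (leaf a) Ck[r]) Ck[s] := by
  obtain ⟨r, hr, hh⟩ := mem_flatMap.1 hh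
  obtain ⟨s, hs, rfl⟩ := mem_map.1 hh
  rw [mem_range] at hr hs
  refine ⟨r, s, hr, by omega, ?_⟩
  rw [getD_eq_getElem _ _ hr, getD_eq_getElem _ _ (by omega)]

lemma mem_nextLevel {h : FM} (hh : h ∈ nextLevel C m) :
    (m = 1 ∧ h = leaf c) ∨
      (2 ≤ m ∧ ∃ w ∈ C (m - 1), h = node (leaf b) w) ∨
      (∃ i, 2 ≤ i ∧ 2 * i ≤ m ∧ ∃ v ∈ C (i - 1), ∃ w ∈ C (m - i),
        h = node (node (leaf a) v) w) ∨
      (∃ k, m = 2 * k + 1 ∧ ∃ r s, ∃ (hr : r < (C k).length) (hs : s ≤ r),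
        h = node (node (leaf a) (C k)[r]) (C k)[s]) := by
  unfold nextLevel at hh
  split_ifs at hh with h1 h2
  · exact Or.inl ⟨h1, mem_singleton.1 hh⟩
  · exact Or.inr ((mem_prodBlocks hh).imp_right Or.inl)
  · rcases mem_append.1 hh with he | hp
    · exact Or.inr (Or.inr (Or.inr ⟨m / 2, by omega, mem_eBlock he⟩))
    · exact Or.inr ((mem_prodBlocks hp).imp_right Or.inl)

lemma exists_lev_left_of_mem_prodBlock (hlev : ∀ i < m, ∀ h ∈ C i, lev h = i) {i : ℕ} {h : FM}
    (hi : 1 ≤ i) (him : i < m) (hh : h ∈ prodBlock C m i) : ∃ s t, h = node s t ∧ lev s = i := by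
  rcases mem_prodBlock hh with ⟨rfl, w, -, rfl⟩ | ⟨-, v, hv, w, -, rfl⟩
  · exact ⟨_, w, rfl, rfl⟩
  · refine ⟨_, w, rfl, ?_⟩
    rw [lev_node, lev_leaf, hlev _ (by omega) v hv]
    omega

lemma nodup_prodBlock (hC : ∀ i < m, (C i).Nodup) {i : ℕ} (hi : 1 ≤ i) (him : i < m) :
    (prodBlock C m i).Nodup := by
  unfold prodBlock
  split_ifs
  · exact (hC (m - 1) (by omega)).map fun _ _ h => (node.inj h).2
  refine nodup_flatMap.2 ⟨fun v _ => (hC (m - i) (by omega)).map fun _ _ h => (node.inj h).2, ?_⟩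
  refine (hC (i - 1) (by omega)).imp fun hvv x hx hx' => ?_
  obtain ⟨w, -, rfl⟩ := mem_map.1 hx
  obtain ⟨w', -, he⟩ := mem_map.1 hx'
  exact hvv (node.inj (node.inj he).1).2.symm

lemma nodup_prodBlocks (hC : ∀ i < m, (C i).Nodup) (hlev : ∀ i < m, ∀ h ∈ C i, lev h = i) :
    (prodBlocks C m).Nodup := by
  refine nodup_flatMap.2 ⟨fun j hj => ?_, nodup_range.pairwise_of_forall_ne ?_⟩
  · rw [mem_range] at hj
    exact nodup_prodBlock hC (by omega) (by omega)
  intro j hj j' hj' hjj x hx hx'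
  rw [mem_range] at hj hj'
  obtain ⟨s, t, rfl, hs⟩ := exists_lev_left_of_mem_prodBlock hlev (by omega) (by omega) hx
  obtain ⟨s', t', he, hs'⟩ := exists_lev_left_of_mem_prodBlock hlev (by omega) (by omega) hx'
  rw [(node.inj he).1, hs'] at hs
  omega

lemma nodup_eBlock {Ck : List FM} (hCk : Ck.Nodup) : (eBlock Ck).Nodup := by
  have getD_inj {r s : ℕ} (hr : r < Ck.length) (hs : s < Ck.length)
      (h : Ck.getD r (leaf a) = Ck.getD s (leaf a)) : r = s := by
    rwa [getD_eq_getElem _ _ hr, getD_eq_getElem _ _ hs, hCk.getElem_inj_iff] at h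
  refine nodup_flatMap.2 ⟨fun r hr => ?_, nodup_range.pairwise_of_forall_ne ?_⟩
  · rw [mem_range] at hr
    refine nodup_range.map_on fun s hs s' hs' he => ?_
    rw [mem_range] at hs hs'
    exact getD_inj (by omega) (by omega) (node.inj he).2
  intro r hr r' hr' hrr x hx hx'
  rw [mem_range] at hr hr'
  obtain ⟨s, -, rfl⟩ := mem_map.1 hx
  obtain ⟨s', -, he⟩ := mem_map.1 hx'
  exact hrr (getD_inj hr' hr (node.inj (node.inj he).1).2).symm

lemma nodup_nextLevel (hC : ∀ i < m, (C i).Nodup) (hlev : ∀ i < m, ∀ h ∈ C i, lev h = i) :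
    (nextLevel C m).Nodup := by
  unfold nextLevel
  split_ifs with h1 h2
  · exact nodup_singleton _
  · exact nodup_prodBlocks hC hlev
  refine (nodup_eBlock (hC _ (by omega))).append (nodup_prodBlocks hC hlev) fun x hx hx' => ?_
  obtain ⟨r, s, hr, hs, rfl⟩ := mem_eBlock hx
  obtain ⟨j, hj, hx'⟩ := mem_flatMap.1 hx'
  rw [mem_range] at hj
  obtain ⟨s, t, he, hs⟩ := exists_lev_left_of_mem_prodBlock hlev (by omega) (by omega) hx'
  rw [← (node.inj he).1, lev_node, lev_leaf, hlev _ (by omega) _ (getElem_mem _)] at hs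
  omega

end NextLevel

lemma length_HClevels (n : ℕ) : (HClevels n).length = n + 1 := by
  induction n with
  | zero => rfl
  | succ n ih => simp [HClevels, ih]

lemma HClevels_succ (n : ℕ) :
    HClevels (n + 1) = HClevels n ++ [nextLevel (fun i => (HClevels n).getD i []) (n + 1)] :=
  rfl

lemma getD_HClevels {i n : ℕ} (h : i ≤ n) : (HClevels n).getD i [] = HCn i := by
  induction n with
  | zero => obtain rfl := Nat.le_zero.1 h; rfl
  | succ n ih =>
    rcases h.lt_or_eq with h | rfl
    · rw [HClevels_succ, getD_append _ _ _ _ (by rw [length_HClevels]; omega)]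
      exact ih (by omega)
    · rfl

lemma HCn_zero : HCn 0 = [] := rfl

lemma HCn_succ (n : ℕ) : HCn (n + 1) = nextLevel HCn (n + 1) := by
  rw [HCn, HClevels_succ, getD_append_right _ _ _ _ (by rw [length_HClevels]),
    length_HClevels, Nat.sub_self]
  exact nextLevel_congr fun i hi => getD_HClevels (by omega)

lemma lev_of_mem_HCn {n : ℕ} {h : FM} (hh : h ∈ HCn n) : lev h = n := by
  induction n using Nat.strong_induction_on generalizing h with
  | _ n ih =>
    obtain _ | n := n
    · simp [HCn_zero] at hh
    rw [HCn_succ] at hh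
    rcases mem_nextLevel hh with ⟨hm, rfl⟩ | ⟨hm, w, hw, rfl⟩ | ⟨i, hi, him, v, hv, w, hw, rfl⟩ |
        ⟨k, hk, r, s, hr, hs, rfl⟩
    · rw [lev_leaf, hm]
    · simp only [lev_node, lev_leaf, ih _ (by omega) hw]; omega
    · simp only [lev_node, lev_leaf, ih _ (by omega) hv, ih _ (by omega) hw]; omega
    · simp only [lev_node, lev_leaf, ih k (by omega) (getElem_mem _)]; omega

lemma nodup_HCn (n : ℕ) : (HCn n).Nodup := by
  induction n using Nat.strong_induction_on with
  | _ n ih =>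
    obtain _ | n := n
    · exact nodup_nil
    rw [HCn_succ]
    exact nodup_nextLevel ih fun i _ _ => lev_of_mem_HCn

lemma cIdx_getElem_HCn {k r : ℕ} (hr : r < (HCn k).length) : cIdx (HCn k)[r] = r := by
  rw [cIdx, lev_of_mem_HCn (getElem_mem hr)]
  exact (nodup_HCn k).idxOf_getElem r hr

lemma cLe_getElem_HCn {k r s : ℕ} (hr : r < (HCn k).length) (hs : s ≤ r) :
    cLe (HCn k)[s] (HCn k)[r] := by
  rcases hs.lt_or_eq with hs | rfl
  · refine Or.inl (Or.inr ⟨?_, ?_⟩)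
    · rw [lev_of_mem_HCn (getElem_mem _), lev_of_mem_HCn (getElem_mem _)]
    · rwa [cIdx_getElem_HCn, cIdx_getElem_HCn]
  · exact Or.inr rfl

lemma node_a_mem_HBn {v : FM} {k : ℕ} (hv : v ∈ HCn k) : node (leaf a) v ∈ HBn (k + 1) := by
  obtain _ | k := k
  · simp [HCn_zero] at hv
  · exact mem_map.2 ⟨v, hv, rfl⟩

lemma memHB_b : memHB (leaf b) := ⟨1, mem_singleton_self _⟩

lemma node_mem_HCn_structure {h' h'' : FM} {m : ℕ} (hh : node h' h'' ∈ HCn m) :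
    memHB h' ∧ memHC h'' ∧ lev h'' < m ∧
      (h' = leaf b ∨ ∃ v, h' = node (leaf a) v ∧ memHC v ∧ cLe h'' v) := by
  obtain _ | n := m
  · simp [HCn_zero] at hh
  rw [HCn_succ] at hh
  rcases mem_nextLevel hh with ⟨-, ⟨⟩⟩ | ⟨hm, w, hw, he⟩ | ⟨i, hi, him, v, hv, w, hw, he⟩ |
      ⟨k, hk, r, s, hr, hs, he⟩ <;> obtain ⟨rfl, rfl⟩ := node.inj he
  · exact ⟨memHB_b, ⟨_, hw⟩, by rw [lev_of_mem_HCn hw]; omega, Or.inl rfl⟩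
  · have hlt : cLt h'' v := Or.inl (by rw [lev_of_mem_HCn hv, lev_of_mem_HCn hw]; omega)
    exact ⟨⟨_, node_a_mem_HBn hv⟩, ⟨_, hw⟩, by rw [lev_of_mem_HCn hw]; omega,
      Or.inr ⟨v, rfl, ⟨_, hv⟩, Or.inl hlt⟩⟩
  · exact ⟨⟨_, node_a_mem_HBn (getElem_mem _)⟩, ⟨_, getElem_mem _⟩,
      by rw [lev_of_mem_HCn (getElem_mem _)]; omega,
      Or.inr ⟨_, rfl, ⟨_, getElem_mem _⟩, cLe_getElem_HCn hr hs⟩⟩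

lemma node_mem_HBn_structure {h' h'' : FM} {n : ℕ} (hh : node h' h'' ∈ HBn n) :
    h' = leaf a ∧ memHC h'' := by
  match n, hh with
  | 1, hh => simp [HBn] at hh
  | n + 2, hh =>
    obtain ⟨v, hv, he⟩ := mem_map.1 hh
    obtain ⟨rfl, rfl⟩ := node.inj he
    exact ⟨rfl, _, hv⟩

lemma memHA_node_structure {h' h'' : FM} (hh : memHA (node h' h'')) :
    memHA h' ∧ memHB h'' ∧ (h' = leaf a ∨ ∃ x y, h' = node x y ∧ memHB y ∧ bLe h'' y) := by
  obtain ⟨l, hlB, hchain, he⟩ := hh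
  rcases l.eq_nil_or_concat' with rfl | ⟨L, x, rfl⟩
  · cases he
  simp only [foldl_append, foldl_cons, foldl_nil] at he
  obtain ⟨rfl, rfl⟩ := node.inj he
  refine ⟨⟨L, fun v hv => hlB v (by simp [hv]), hchain.prefix (prefix_append _ _), rfl⟩,
    hlB _ (by simp), ?_⟩
  rcases L.eq_nil_or_concat' with rfl | ⟨M, y, rfl⟩
  · exact Or.inl rfl
  · refine Or.inr ⟨M.foldl node (leaf a), y, by simp, hlB y (by simp), ?_⟩
    exact (isChain_append.1 hchain).2.2 y (by simp) _ rfl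

def HallConditions (lt : FM → FM → Prop) (h' h'' : FM) : Prop :=
  (memH h'' ∧ lt (node h' h'') h'') ∧ (memH h' ∧ lt h' h'') ∧
    (h' = leaf a ∨ h' = leaf b ∨ ∃ x y, h' = node x y ∧ memH y ∧ (lt h'' y ∨ y = h''))

section HallConditions

variable {lt : FM → FM → Prop} {h' h'' : FM}

lemma hallConditions_of_memHA (hb : ∀ v w, memHB v → memHB w → bLt v w → lt v w)
    (hAB : ∀ v w, memHA v → memHB w → lt v w) (hh : memHA (node h' h'')) :
    HallConditions lt h' h'' := by
  obtain ⟨hA', hB'', hleft⟩ := memHA_node_structure hh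
  refine ⟨⟨Or.inr (Or.inl hB''), hAB _ _ hh hB''⟩, ⟨Or.inl hA', hAB _ _ hA' hB''⟩, ?_⟩
  rcases hleft with rfl | ⟨x, y, rfl, hy, hle | rfl⟩
  · exact Or.inl rfl
  · exact Or.inr (Or.inr ⟨x, y, rfl, Or.inr (Or.inl hy), Or.inl (hb _ _ hB'' hy hle)⟩)
  · exact Or.inr (Or.inr ⟨x, h'', rfl, Or.inr (Or.inl hy), Or.inr rfl⟩)

lemma hallConditions_of_memHB (hBC : ∀ v w, memHB v → memHC w → lt v w)
    (hAC : ∀ v w, memHA v → memHC w → lt v w) (hh : memHB (node h' h'')) :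
    HallConditions lt h' h'' := by
  obtain ⟨n, hn⟩ := hh
  obtain ⟨rfl, hC''⟩ := node_mem_HBn_structure hn
  have hA : memHA (leaf a) := ⟨[], by simp, isChain_nil, rfl⟩
  exact ⟨⟨Or.inr (Or.inr hC''), hBC _ _ ⟨n, hn⟩ hC''⟩, ⟨Or.inl hA, hAC _ _ hA hC''⟩, Or.inl rfl⟩

lemma hallConditions_of_memHC (hc : ∀ v w, memHC v → memHC w → cLt v w → lt v w)
    (hBC : ∀ v w, memHB v → memHC w → lt v w) (hh : memHC (node h' h'')) :
    HallConditions lt h' h'' := by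
  obtain ⟨m, hm⟩ := hh
  obtain ⟨hB', hC'', hlev, hleft⟩ := node_mem_HCn_structure hm
  have hlt : lt (node h' h'') h'' :=
    hc _ _ ⟨m, hm⟩ hC'' (Or.inl (by rwa [lev_of_mem_HCn hm]))
  refine ⟨⟨Or.inr (Or.inr hC''), hlt⟩, ⟨Or.inr (Or.inl hB'), hBC _ _ hB' hC''⟩, ?_⟩
  rcases hleft with rfl | ⟨v, rfl, hv, hle | rfl⟩
  · exact Or.inr (Or.inl rfl)
  · exact Or.inr (Or.inr ⟨_, v, rfl, Or.inr (Or.inr hv), Or.inl (hc _ _ hC'' hv hle)⟩)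
  · exact Or.inr (Or.inr ⟨_, h'', rfl, Or.inr (Or.inr hv), Or.inr rfl⟩)

end HallConditions

theorem hall_set_conditions_general (lt : FM → FM → Prop)
    (hb : ∀ v w : FM, memHB v → memHB w → (lt v w ↔ bLt v w))
    (hc : ∀ v w : FM, memHC v → memHC w → (lt v w ↔ cLt v w))
    (hAB : ∀ v w : FM, memHA v → memHB w → lt v w)
    (hBC : ∀ v w : FM, memHB v → memHC w → lt v w)
    (hAC : ∀ v w : FM, memHA v → memHC w → lt v w) :
    ∀ h' h'' : FM, memH (FM.node h' h'') →
      (memH h'' ∧ lt (FM.node h' h'') h'') ∧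
      (memH h' ∧ lt h' h'') ∧
      (h' = FM.leaf Letter.a ∨ h' = FM.leaf Letter.b ∨
        ∃ x y : FM, h' = FM.node x y ∧ memH y ∧ (lt h'' y ∨ y = h'')) := by
  rintro h' h'' (hA | hB | hC)
  · exact hallConditions_of_memHA (fun v w hv hw => (hb v w hv hw).2) hAB hA
  · exact hallConditions_of_memHB hBC hAC hB
  · exact hallConditions_of_memHC (fun v w hv hw => (hc v w hv hw).2) hBC hC

/-- Let `lt` be (the strict form of) any total order on `H` which: agrees with
the constructed orders on `H_b` and on `H_c`; is arbitrary within each `H_a^n`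
but puts elements of `H_a^p` before elements of `H_a^q` whenever `p > q`; and
puts every element of `H_a` before every element of `H_b`, and every element of
`H_b` before every element of `H_c` (hence elements of `H_a` before elements of
`H_c`).  Then the Hall-set conditions hold for every composite element
`h = (h′,h″) ∈ H`: `h″ ∈ H` and `h < h″`; `h′ ∈ H` and `h′ < h″`; and either
`h′` is a letter (`a` or `b`) or `h′ = (x,y)` with `y ∈ H` and `y ≥ h″`. -/
theorem hall_set_conditions (lt : FM → FM → Prop)
    (htrans : ∀ x y z : FM, memH x → memH y → memH z → lt x y → lt y z → lt x z)
    (hasymm : ∀ x y : FM, memH x → memH y → lt x y → ¬ lt y x)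
    (htotal : ∀ x y : FM, memH x → memH y → lt x y ∨ x = y ∨ lt y x)
    (hb : ∀ v w : FM, memHB v → memHB w → (lt v w ↔ bLt v w))
    (hc : ∀ v w : FM, memHC v → memHC w → (lt v w ↔ cLt v w))
    (haLev : ∀ v w : FM, memHA v → memHA w → lev w < lev v → lt v w)
    (hAB : ∀ v w : FM, memHA v → memHB w → lt v w)
    (hBC : ∀ v w : FM, memHB v → memHC w → lt v w)
    (hAC : ∀ v w : FM, memHA v → memHC w → lt v w) :
    ∀ h' h'' : FM, memH (FM.node h' h'') →
      (memH h'' ∧ lt (FM.node h' h'') h'') ∧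
      (memH h' ∧ lt h' h'') ∧
      (h' = FM.leaf Letter.a ∨ h' = FM.leaf Letter.b ∨
        ∃ x y : FM, h' = FM.node x y ∧ memH y ∧ (lt h'' y ∨ y = h'')) :=
  hall_set_conditions_general lt hb hc hAB hBC hAC
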